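/- Let a_1,...,a_k, b, n be integers with n ≥ 1, and suppose that gcd(∑_{i∈I} a_i, n) = 1 for every nonempty proper subset I of {1,...,k}. If d = gcd(a_1 + ... + a_k, n) divides b, then the number of solutions (x_1,...,x_k) ∈ (Z/nZ)^k of a_1x_1 + ... + a_kx_k ≡ b (mod n) with all x_i pairwise distinct equals (-1)^{k-1}(k-1)!(d-1) + (n-1)(n-2)···(n-k+1). -/

import Mathlib

/-!
Peel off the last unknown. Since the coefficient `a_k` is a unit, every injective
`(x_1, …, x_{k-1})` extends to exactly one solution, so there are `q (q-1) ⋯ (q-k+2)` solutions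
(`q` the size of the ring) whose first `k - 1` entries are distinct. Such a solution fails to be
injective iff `x_k = x_j` for exactly one `j < k`, and those with `x_k = x_j` are the injective
solutions of the equation in `k - 1` unknowns where `a_j` is replaced by `a_j + a_k`. The merged
coefficients again have unit proper subsums and the same total sum, so induction on `k`, starting
from the `s` solutions of `(∑ a_i) t = b`, gives the closed form. Over `ZMod n`, `s = gcd(∑ a_i, n)`.
-/

open Finset

section FiberSum

variable {ι κ R : Type*} [Fintype ι] [DecidableEq κ]

def fiberSum [AddCommMonoid R] (φ : ι → κ) (a : ι → R) (j : κ) : R :=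
  ∑ i with φ i = j, a i

lemma sum_fiberSum [AddCommMonoid R] (φ : ι → κ) (a : ι → R) (I : Finset κ) :
    ∑ j ∈ I, fiberSum φ a j = ∑ i with φ i ∈ I, a i := by
  rw [← sum_fiberwise_of_maps_to (g := φ) (t := I) (fun i hi => (mem_filter.1 hi).2)]
  refine sum_congr rfl fun j hj => ?_
  rw [fiberSum, filter_filter]
  congr 1
  ext i
  simp only [mem_filter, mem_univ, true_and]
  exact ⟨fun h => ⟨h ▸ hj, h⟩, And.right⟩

lemma sum_mul_comp_eq_sum_fiberSum [Fintype κ] [CommSemiring R] (φ : ι → κ) (a : ι → R)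
    (x : κ → R) : ∑ i, a i * x (φ i) = ∑ j, fiberSum φ a j * x j := by
  simp_rw [fiberSum, sum_mul]
  rw [← sum_fiberwise univ φ]
  refine sum_congr rfl fun j _ => sum_congr rfl fun i hi => ?_
  rw [(mem_filter.1 hi).2]

def ProperSubsumsAreUnits [CommSemiring R] (a : ι → R) : Prop :=
  ∀ I : Finset ι, I.Nonempty → I ≠ univ → IsUnit (∑ i ∈ I, a i)

lemma ProperSubsumsAreUnits.fiberSum [Fintype κ] [CommSemiring R] {a : ι → R}
    (ha : ProperSubsumsAreUnits a) {φ : ι → κ} (hφ : Function.Surjective φ) :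
    ProperSubsumsAreUnits (fiberSum φ a) := by
  intro I hne hI
  rw [sum_fiberSum]
  refine ha _ ?_ ?_
  · obtain ⟨j, hj⟩ := hne
    obtain ⟨i, rfl⟩ := hφ j
    exact ⟨i, by simpa using hj⟩
  · obtain ⟨j, hj⟩ : ∃ j, j ∉ I := by simpa [eq_univ_iff_forall] using hI
    obtain ⟨i, rfl⟩ := hφ j
    simpa [eq_univ_iff_forall] using ⟨i, hj⟩

end FiberSum

section CollapseLast

variable {α : Type*} {m : ℕ}

lemma injective_iff_injective_init_and_ne_last {x : Fin (m + 1) → α} :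
    Function.Injective x ↔
      Function.Injective (Fin.init x) ∧ ∀ j : Fin m, x j.castSucc ≠ x (Fin.last m) := by
  have h := Fin.snoc_injective_iff (x := Fin.init x) (x₀ := x (Fin.last m))
  rw [Fin.snoc_init_self] at h
  simp [h, Fin.init]

/-- `x ∘ collapseLast j` is the tuple `x` with `x j` appended. -/
def collapseLast (j : Fin m) : Fin (m + 1) → Fin m :=
  Fin.lastCases j id

@[simp]
lemma collapseLast_last (j : Fin m) : collapseLast j (Fin.last m) = j :=
  Fin.lastCases_last

@[simp]
lemma collapseLast_castSucc (j i : Fin m) : collapseLast j i.castSucc = i :=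
  Fin.lastCases_castSucc i

lemma collapseLast_surjective (j : Fin m) : Function.Surjective (collapseLast j) :=
  fun i => ⟨i.castSucc, collapseLast_castSucc j i⟩

lemma init_collapseLast_apply {x : Fin (m + 1) → α} {j : Fin m}
    (hx : x j.castSucc = x (Fin.last m)) (i : Fin (m + 1)) :
    Fin.init x (collapseLast j i) = x i := by
  induction i using Fin.lastCases <;> simp [Fin.init, hx]

lemma init_comp_collapseLast (x : Fin m → α) (j : Fin m) :
    Fin.init (x ∘ collapseLast j) = x := by
  funext i
  simp [Fin.init]

end CollapseLast

section InjSolutions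

variable {R : Type*} [CommRing R] {m : ℕ}

lemma sum_mul_eq_iff_last_eq {a : Fin (m + 1) → R} {u : Rˣ} (hu : ↑u = a (Fin.last m)) {b : R}
    {x : Fin (m + 1) → R} :
    ∑ i, a i * x i = b ↔
      x (Fin.last m) = ↑u⁻¹ * (b - ∑ i : Fin m, a i.castSucc * x i.castSucc) := by
  rw [Fin.sum_univ_castSucc, Units.eq_inv_mul_iff_mul_eq, hu, eq_sub_iff_add_eq']

lemma card_injective_fin (R : Type*) [Fintype R] [DecidableEq R] (m : ℕ) :
    #{x : Fin m → R | Function.Injective x} = (Fintype.card R).descFactorial m := by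
  rw [← Fintype.card_subtype, Fintype.card_congr (Equiv.subtypeInjectiveEquivEmbedding _ _),
    Fintype.card_embedding_eq, Fintype.card_fin]

variable [Fintype R] [DecidableEq R]

def injSolutions {k : ℕ} (a : Fin k → R) (b : R) : Finset (Fin k → R) :=
  {x | ∑ i, a i * x i = b ∧ Function.Injective x}

lemma card_injSolutions_fin_one (a : Fin 1 → R) (b : R) :
    #(injSolutions a b) = #{t : R | a 0 * t = b} := by
  refine card_nbij' (· 0) (fun t _ => t) (fun x hx => ?_) (fun t ht => ?_)
    (fun x _ => funext fun i => by rw [Subsingleton.elim i 0]) (fun t _ => rfl)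
  · simp_all [injSolutions]
  · simp_all [injSolutions, Function.injective_of_subsingleton]

lemma card_solutions_injective_init {a : Fin (m + 1) → R} (ha : IsUnit (a (Fin.last m)))
    (b : R) :
    #{x : Fin (m + 1) → R | ∑ i, a i * x i = b ∧ Function.Injective (Fin.init x)} =
      (Fintype.card R).descFactorial m := by
  obtain ⟨u, hu⟩ := ha
  rw [← card_injective_fin]
  refine card_nbij' Fin.init (fun x' => Fin.snoc x' (↑u⁻¹ * (b - ∑ i, a i.castSucc * x' i)))
    (fun x hx => by simp_all) (fun x' hx' => ?_) (fun x hx => ?_) (fun x' _ => Fin.init_snoc _ _)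
  · simp only [coe_filter, mem_univ, true_and, Set.mem_ofPred_eq, Fin.init_snoc] at hx' ⊢
    refine ⟨(sum_mul_eq_iff_last_eq hu).2 ?_, hx'⟩
    simp only [Fin.snoc_castSucc, Fin.snoc_last]
  · simp only [coe_filter, mem_univ, true_and, Set.mem_ofPred_eq] at hx
    conv_rhs => rw [← Fin.snoc_init_self x, (sum_mul_eq_iff_last_eq hu).1 hx.1]
    rfl

lemma card_solutions_injective_init_eq (a : Fin (m + 1) → R) (b : R) :
    #{x : Fin (m + 1) → R | ∑ i, a i * x i = b ∧ Function.Injective (Fin.init x)} =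
      #(injSolutions a b) + ∑ j : Fin m, #{x : Fin (m + 1) → R | ∑ i, a i * x i = b ∧
        Function.Injective (Fin.init x) ∧ x j.castSucc = x (Fin.last m)} := by
  rw [← card_filter_add_card_filter_not Function.Injective, ← card_biUnion]
  · congr 2 <;> ext x
    · simp only [injSolutions, filter_filter, mem_filter, mem_univ, true_and,
        injective_iff_injective_init_and_ne_last (x := x)]
      tauto
    · simp only [filter_filter, mem_filter, mem_biUnion, mem_univ, true_and,
        injective_iff_injective_init_and_ne_last (x := x), not_and, not_forall, not_not]
      tauto
  · intro j _ j' _ hjj'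
    exact disjoint_filter.2 fun x _ h h' => hjj' (h.2.1 (h.2.2.trans h'.2.2.symm))

lemma card_solutions_injective_init_castSucc_eq_last (a : Fin (m + 1) → R) (b : R) (j : Fin m) :
    #{x : Fin (m + 1) → R | ∑ i, a i * x i = b ∧
        Function.Injective (Fin.init x) ∧ x j.castSucc = x (Fin.last m)} =
      #(injSolutions (fiberSum (collapseLast j) a) b) := by
  refine card_nbij' Fin.init (· ∘ collapseLast j) (fun x hx => ?_) (fun x' hx' => ?_)
    (fun x hx => ?_) (fun x' _ => init_comp_collapseLast x' j)
  · simp only [injSolutions, coe_filter, mem_univ, true_and, Set.mem_ofPred_eq] at hx ⊢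
    refine ⟨?_, hx.2.1⟩
    simp only [← sum_mul_comp_eq_sum_fiberSum, init_collapseLast_apply hx.2.2, hx.1]
  · simp only [injSolutions, coe_filter, mem_univ, true_and, Set.mem_ofPred_eq,
      Function.comp_apply] at hx' ⊢
    rw [sum_mul_comp_eq_sum_fiberSum, init_comp_collapseLast]
    exact ⟨hx'.1, hx'.2, by simp⟩
  · simp only [coe_filter, mem_univ, true_and, Set.mem_ofPred_eq] at hx
    exact funext (init_collapseLast_apply hx.2.2)

lemma card_injSolutions_add_sum_collapseLast {a : Fin (m + 1) → R}
    (ha : IsUnit (a (Fin.last m))) (b : R) :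
    #(injSolutions a b) + ∑ j : Fin m, #(injSolutions (fiberSum (collapseLast j) a) b) =
      (Fintype.card R).descFactorial m := by
  rw [← card_solutions_injective_init ha b, card_solutions_injective_init_eq]
  simp_rw [card_solutions_injective_init_castSucc_eq_last]

end InjSolutions

/-- The paper's count for `k = m + 1` unknowns over a ring with `q` elements, where `s` is the
number of solutions of `(a_1 + ⋯ + a_k) t = b`. -/
def distinctSolutionCount (q : ℕ) (s : ℤ) (m : ℕ) : ℤ :=
  (-1) ^ m * m.factorial * (s - 1) + ∏ j ∈ range m, ((q : ℤ) - (j + 1))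

lemma descFactorial_sub_mul_distinctSolutionCount (q : ℕ) (s : ℤ) (m : ℕ) :
    (q.descFactorial (m + 1) : ℤ) - (m + 1) * distinctSolutionCount q s m =
      distinctSolutionCount q s (m + 1) := by
  rw [← descPochhammer_eval_eq_descFactorial ℤ, descPochhammer_eval_eq_prod_range,
    prod_range_succ', distinctSolutionCount, distinctSolutionCount, prod_range_succ,
    Nat.factorial_succ]
  push_cast
  ring

theorem card_injSolutions {R : Type*} [CommRing R] [Fintype R] [DecidableEq R] {m : ℕ}
    {a : Fin (m + 1) → R} (ha : ProperSubsumsAreUnits a) (b : R) :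
    (#(injSolutions a b) : ℤ) =
      distinctSolutionCount (Fintype.card R) #{t : R | (∑ i, a i) * t = b} m := by
  induction m with
  | zero => simp [card_injSolutions_fin_one, distinctSolutionCount]
  | succ m ih =>
    have hlast : IsUnit (a (Fin.last (m + 1))) := by
      simpa using ha {Fin.last _} (singleton_nonempty _) fun h => by simpa using congrArg card h
    have hmerged (j : Fin (m + 1)) :
        (#(injSolutions (fiberSum (collapseLast j) a) b) : ℤ) =
          distinctSolutionCount (Fintype.card R) #{t : R | (∑ i, a i) * t = b} m := by
      rw [ih (ha.fiberSum (collapseLast_surjective j)), sum_fiberSum]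
      simp
    rw [← descFactorial_sub_mul_distinctSolutionCount,
      ← card_injSolutions_add_sum_collapseLast hlast b]
    push_cast
    simp [hmerged]

section ZMod

lemma isUnit_intCast_of_gcd_eq_one {n : ℕ} {c : ℤ} (h : Int.gcd c n = 1) :
    IsUnit (c : ZMod n) :=
  .of_mul_eq_one _ (ZMod.coe_int_mul_inv_eq_one (Int.isCoprime_iff_gcd_eq_one.2 h))

lemma card_intCast_mul_eq_zero (n : ℕ) [NeZero n] (c : ℤ) :
    #{x : ZMod n | (c : ZMod n) * x = 0} = Int.gcd c n := by
  have hker := IsAddCyclic.card_nsmulAddMonoidHom_ker (ZMod n) c.natAbs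
  rw [Nat.card_zmod, Nat.card_eq_fintype_card, Fintype.card_subtype] at hker
  rw [Int.gcd, Int.natAbs_natCast, Nat.gcd_comm, ← hker]
  congr 1
  ext x
  obtain ⟨k, rfl | rfl⟩ := Int.eq_nat_or_neg c <;> simp [nsmul_eq_mul]

lemma card_intCast_mul_eq (n : ℕ) [NeZero n] (c b : ℤ) (hb : (Int.gcd c n : ℤ) ∣ b) :
    #{x : ZMod n | (c : ZMod n) * x = b} = Int.gcd c n := by
  have hsol : (b : ZMod n) ∈ Set.range (AddMonoidHom.mulLeft (c : ZMod n)) := by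
    obtain ⟨t, rfl⟩ := hb
    refine ⟨(Int.gcdA c n * t : ℤ), ?_⟩
    rw [AddMonoidHom.coe_mulLeft, Int.gcd_eq_gcd_ab]
    push_cast
    rw [ZMod.natCast_self]
    ring
  rw [← card_intCast_mul_eq_zero n c]
  exact AddMonoidHom.card_fiber_eq_of_mem_range _ hsol ⟨0, mul_zero _⟩

end ZMod

theorem stmt_5 (k n : ℕ) (hn : 1 ≤ n) (hk : 1 ≤ k) (a : Fin k → ℤ) (b : ℤ)
    (hI : ∀ I : Finset (Fin k), I.Nonempty → I ≠ Finset.univ →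
      Int.gcd (∑ i ∈ I, a i) n = 1)
    (hb : (Int.gcd (∑ i, a i) n : ℤ) ∣ b) :
    (Nat.card {x : Fin k → ZMod n //
        ∑ i, (a i : ZMod n) * x i = (b : ZMod n) ∧ Function.Injective x} : ℤ) =
      (-1) ^ (k - 1) * (Nat.factorial (k - 1) : ℤ) * ((Int.gcd (∑ i, a i) n : ℤ) - 1) +
        ∏ j ∈ Finset.range (k - 1), ((n : ℤ) - (j + 1)) := by
  have : NeZero n := ⟨by omega⟩
  obtain ⟨m, rfl⟩ : ∃ m, k = m + 1 := ⟨k - 1, by omega⟩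
  have ha : ProperSubsumsAreUnits fun i => (a i : ZMod n) := fun I hne hI' => by
    simpa using isUnit_intCast_of_gcd_eq_one (hI I hne hI')
  have hcount := card_injSolutions ha (b : ZMod n)
  rw [← Int.cast_sum, card_intCast_mul_eq n _ b hb, ZMod.card] at hcount
  rw [Nat.card_eq_fintype_card, Fintype.card_subtype, Nat.add_sub_cancel]
  exact hcount
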